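/- arXiv:2012.06468 — 3 statements merged into one kernel-verified Lean document; each statement's English description precedes it below -/
import Mathlib

section
/- The relational composition ↔R↔ of a strong bisimulation up to ↔ with bisimilarity on both sides is itself a strong bisimulation. -/
/-- `R` is a strong bisimulation for the transition relation `Tr`. -/
def IsBisim {S L : Type*} (Tr : S → L → S → Prop) (R : S → S → Prop) : Prop :=
  ∀ s t, R s t →
    (∀ ω s', Tr s ω s' → ∃ t', Tr t ω t' ∧ R s' t') ∧
    (∀ ω t', Tr t ω t' → ∃ s', Tr s ω s' ∧ R s' t')

/-- States are strongly bisimilar iff related by some strong bisimulation. -/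
def Bisim {S L : Type*} (Tr : S → L → S → Prop) (s t : S) : Prop :=
  ∃ R, IsBisim Tr R ∧ R s t

/-- Relational composition `↔ R ↔`. -/
def CompRel' {S : Type*} (B R : S → S → Prop) (s t : S) : Prop :=
  ∃ s' t', B s s' ∧ R s' t' ∧ B t' t

/-- `R` is a strong bisimulation up to bisimilarity. -/
def IsBisimUpTo {S L : Type*} (Tr : S → L → S → Prop) (R : S → S → Prop) : Prop :=
  ∀ s t, R s t →
    (∀ ω s', Tr s ω s' → ∃ t', Tr t ω t' ∧ CompRel' (Bisim Tr) R s' t') ∧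
    (∀ ω t', Tr t ω t' → ∃ s', Tr s ω s' ∧ CompRel' (Bisim Tr) R s' t')

/-! Bisimilarity is itself a bisimulation, so the two outer `↔` links of `↔R↔` can match any
transition, and it is transitive, so it absorbs the extra `↔` links that the up-to step for `R`
produces. -/

section

variable {S L : Type*} {Tr : S → L → S → Prop}

theorem IsBisim.comp {R₁ R₂ : S → S → Prop} (h₁ : IsBisim Tr R₁) (h₂ : IsBisim Tr R₂) :
    IsBisim Tr (Relation.Comp R₁ R₂) := by
  rintro s u ⟨t, hst, htu⟩
  constructor
  · intro ω s' hs'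
    obtain ⟨t', ht', hst'⟩ := (h₁ s t hst).1 ω s' hs'
    obtain ⟨u', hu', htu'⟩ := (h₂ t u htu).1 ω t' ht'
    exact ⟨u', hu', t', hst', htu'⟩
  · intro ω u' hu'
    obtain ⟨t', ht', htu'⟩ := (h₂ t u htu).2 ω u' hu'
    obtain ⟨s', hs', hst'⟩ := (h₁ s t hst).2 ω t' ht'
    exact ⟨s', hs', t', hst', htu'⟩

theorem Bisim.trans {a b c : S} : Bisim Tr a b → Bisim Tr b c → Bisim Tr a c
  | ⟨_, h₁, hab⟩, ⟨_, h₂, hbc⟩ => ⟨_, h₁.comp h₂, b, hab, hbc⟩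

theorem isBisim_bisim : IsBisim Tr (Bisim Tr) := by
  rintro s t ⟨R, hR, hst⟩
  constructor
  · intro ω s' hs'
    obtain ⟨t', ht', hst'⟩ := (hR s t hst).1 ω s' hs'
    exact ⟨t', ht', R, hR, hst'⟩
  · intro ω t' ht'
    obtain ⟨s', hs', hst'⟩ := (hR s t hst).2 ω t' ht'
    exact ⟨s', hs', R, hR, hst'⟩

theorem CompRel'.bisim_trans {R : S → S → Prop} {a b c d : S} (hbc : CompRel' (Bisim Tr) R b c)
    (hab : Bisim Tr a b) (hcd : Bisim Tr c d) : CompRel' (Bisim Tr) R a d :=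
  let ⟨b', c', hbb', hb'c', hc'c⟩ := hbc
  ⟨b', c', hab.trans hbb', hb'c', hc'c.trans hcd⟩

end

/-- If `R` is a strong bisimulation up to `↔`, then `↔ R ↔` is a strong
bisimulation. -/
theorem compRel_isBisim {S L : Type*} (Tr : S → L → S → Prop)
    (R : S → S → Prop) (hR : IsBisimUpTo Tr R) :
    IsBisim Tr (CompRel' (Bisim Tr) R) := by
  rintro s t ⟨s', t', hss', hs't', ht't⟩
  constructor
  · intro ω s₁ hs₁
    obtain ⟨s'₁, hs'₁, hs₁s'₁⟩ := (isBisim_bisim s s' hss').1 ω s₁ hs₁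
    obtain ⟨t'₁, ht'₁, hs'₁t'₁⟩ := (hR s' t' hs't').1 ω s'₁ hs'₁
    obtain ⟨t₁, ht₁, ht'₁t₁⟩ := (isBisim_bisim t' t ht't).1 ω t'₁ ht'₁
    exact ⟨t₁, ht₁, hs'₁t'₁.bisim_trans hs₁s'₁ ht'₁t₁⟩
  · intro ω t₁ ht₁
    obtain ⟨t'₁, ht'₁, ht'₁t₁⟩ := (isBisim_bisim t' t ht't).2 ω t₁ ht₁
    obtain ⟨s'₁, hs'₁, hs'₁t'₁⟩ := (hR s' t' hs't').2 ω t'₁ ht'₁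
    obtain ⟨s₁, hs₁, hs₁s'₁⟩ := (isBisim_bisim s s' hss').2 ω s'₁ hs'₁
    exact ⟨s₁, hs₁, hs'₁t'₁.bisim_trans hs₁s'₁ ht'₁t₁⟩
end

section
/- Let P be an LPE with a state invariant ψ, and let P^ψ be the restricted LPE obtained by strengthening the condition of every summand from c_i to c_i ∧ ψ. Then for every initial state ι satisfying ψ, the states P(ι) and P^ψ(ι) are strongly bisimilar. -/
/-- The union LTS of an LPE `P` (on the left) and its restriction `P^ψ`
(on the right), where the conditions of `P^ψ` are strengthened with `ψ`. -/
def UnionTr {D E A I : Type*} (c : I → D → E → Prop) (act : I → D → E → A)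
    (g : I → D → E → D) (ψ : D → Prop) : (D ⊕ D) → A → (D ⊕ D) → Prop :=
  fun s ω s' =>
    (∃ d d', s = Sum.inl d ∧ s' = Sum.inl d' ∧
      ∃ i l, c i d l ∧ ω = act i d l ∧ d' = g i d l) ∨
    (∃ d d', s = Sum.inr d ∧ s' = Sum.inr d' ∧
      ∃ i l, (c i d l ∧ ψ d) ∧ ω = act i d l ∧ d' = g i d l)

/-- If `ψ` is a state invariant of the LPE `P` and `ψ ι` holds, then the state
`P(ι)` and the state `P^ψ(ι)` of the restricted LPE are strongly bisimilar. -/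
theorem restricted_lpe_bisim {D E A I : Type*}
    (c : I → D → E → Prop) (act : I → D → E → A) (g : I → D → E → D)
    (ψ : D → Prop)
    (hinv : ∀ i ι l, c i ι l → ψ ι → ψ (g i ι l))
    (ι : D) (hψ : ψ ι) :
    Bisim (UnionTr c act g ψ) (Sum.inl ι) (Sum.inr ι) := by
  refine ⟨fun s t => ∃ d, ψ d ∧ s = Sum.inl d ∧ t = Sum.inr d, ?_, ι, hψ, rfl, rfl⟩
  rintro s t ⟨d, hd, rfl, rfl⟩
  constructor
  · rintro ω s' (⟨d, d', h1, rfl, i, l, hc, rfl, rfl⟩ | ⟨d, d', h1, _, _⟩)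
    · cases Sum.inl.inj h1
      exact ⟨Sum.inr (g i d l),
        Or.inr ⟨d, _, rfl, rfl, i, l, ⟨hc, hd⟩, rfl, rfl⟩,
        g i d l, hinv i d l hc hd, rfl, rfl⟩
    · exact absurd h1 (by simp)
  · rintro ω t' (⟨d, d', h1, _, _⟩ | ⟨d, d', h1, rfl, i, l, ⟨hc, _⟩, rfl, rfl⟩)
    · exact absurd h1 (by simp)
    · cases Sum.inr.inj h1
      exact ⟨Sum.inl (g i d l),
        Or.inl ⟨d, _, rfl, rfl, i, l, hc, rfl, rfl⟩,
        g i d l, hinv i d l hc hd, rfl, rfl⟩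
end

section
/- Strong bisimilarity is a congruence for the allow operator: if P ↔ Q then ∇_A(P) ↔ ∇_A(Q), where ∇_A(P) has transition ∇_A(P) →ω ∇_A(P') iff P →ω P' and the multiset of labels of ω belongs to A. -/
/-- The transition relation of `∇_A(P)`: a transition `P →ω P'` is kept iff
the multiset of labels of `ω` (forgetting data) belongs to `A`. -/
def AllowTr {S Λ D : Type*} (A : Set (Multiset Λ))
    (Tr : S → Multiset (Λ × D) → S → Prop) :
    S → Multiset (Λ × D) → S → Prop :=
  fun s ω s' => Tr s ω s' ∧ ω.map Prod.fst ∈ A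

/-- Strong bisimilarity is a congruence for the allow operator. -/
theorem bisim_congr_allow {S Λ D : Type*} (A : Set (Multiset Λ))
    (Tr : S → Multiset (Λ × D) → S → Prop) (P Q : S)
    (h : Bisim Tr P Q) :
    Bisim (AllowTr A Tr) P Q := by
  obtain ⟨R, hR, hPQ⟩ := h
  refine ⟨R, fun s t hst => ?_, hPQ⟩
  obtain ⟨h1, h2⟩ := hR s t hst
  constructor
  · rintro ω s' ⟨htr, hA⟩
    obtain ⟨t', ht', hR'⟩ := h1 ω s' htr
    exact ⟨t', ⟨ht', hA⟩, hR'⟩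
  · rintro ω t' ⟨htr, hA⟩
    obtain ⟨s', hs', hR'⟩ := h2 ω t' htr
    exact ⟨s', ⟨hs', hA⟩, hR'⟩
end
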